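/- arXiv:1407.3613 — 9 statements merged into one kernel-verified Lean document; each statement's English description precedes it below -/
import Mathlib

section
/- Counting bound: if C : Fin W → Fin M → ℕ is a valid weighing scheme, then 2^M ≤ ∏_{w} (1 + ∑_m C w m). In particular 2^M ≤ (1 + ∑_m max_w C w m)^W, so the cost K = ∑_m max_w C w m satisfies (1+K)^W ≥ 2^M. -/
/-- Excess-weight vector of state `d` under scheme `C`. -/
def vvec {W M : ℕ} (C : Fin W → Fin M → ℕ) (d : Fin M → Bool) : Fin W → ℕ :=
  fun w => ∑ m, C w m * (if d m then 1 else 0)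

/-- A scheme is valid when excess vectors of distinct states are never
positive rational multiples of each other. -/
def ValidScheme {W M : ℕ} (C : Fin W → Fin M → ℕ) : Prop :=
  ∀ d d' : Fin M → Bool, d ≠ d' →
    ¬ ∃ q : ℚ, 0 < q ∧
      (fun w => (vvec C d' w : ℚ)) = q • (fun w => (vvec C d w : ℚ))

/-- Total number of coins needed: each mint supplies its column maximum. -/
def cost {W M : ℕ} (C : Fin W → Fin M → ℕ) : ℕ :=
  ∑ m, Finset.univ.sup fun w => C w m

theorem stmt_6 {W M : ℕ} (C : Fin W → Fin M → ℕ) (h : ValidScheme C) :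
    2 ^ M ≤ ∏ w, (1 + ∑ m, C w m) ∧ 2 ^ M ≤ (1 + cost C) ^ W := by
  have hinj : Function.Injective (vvec C) := by
    intro d d' hdd
    by_contra hne
    exact h d d' hne ⟨1, one_pos, by
      simp only [one_smul]
      funext w
      rw [hdd]⟩
  have hbound : ∀ d w, vvec C d w < 1 + ∑ m, C w m := by
    intro d w
    have : vvec C d w ≤ ∑ m, C w m := by
      apply Finset.sum_le_sum
      intro m _
      by_cases hd : d m <;> simp [hd]
    omega
  let f : (Fin M → Bool) → (∀ w : Fin W, Fin (1 + ∑ m, C w m)) :=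
    fun d w => ⟨vvec C d w, hbound d w⟩
  have hfinj : Function.Injective f := by
    intro d d' hdd
    apply hinj
    funext w
    exact congrArg Fin.val (congrFun hdd w)
  have hcard := Fintype.card_le_of_injective f hfinj
  simp only [Fintype.card_pi, Fintype.card_fin, Fintype.card_fun, Fintype.card_bool] at hcard
  have h1 : 2 ^ M ≤ ∏ w, (1 + ∑ m, C w m) := by simpa using hcard
  refine ⟨h1, h1.trans ?_⟩
  calc ∏ w, (1 + ∑ m, C w m) ≤ ∏ _w : Fin W, (1 + cost C) := by
        apply Finset.prod_le_prod (fun _ _ => Nat.zero_le _)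
        intro w _
        have : ∑ m, C w m ≤ cost C := by
          apply Finset.sum_le_sum
          intro m _
          exact Finset.le_sup (f := fun w => C w m) (Finset.mem_univ w)
        omega
    _ = (1 + cost C) ^ W := by simp
end

section
/- The 3×4 weighing scheme with rows (0,0,1,0), (0,1,1,2), (1,1,1,0) is valid for 4 mints with 3 weighings: for any two distinct states d ≠ d' : Fin 4 → Bool, the excess vectors v(d), v(d') ∈ ℕ³ are not positive rational multiples of each other. Its cost is 1+1+1+2 = 5. -/
def Qcond {W : ℕ} (a b : Fin W → ℕ) : Prop :=
  (∀ w w', a w * b w' = a w' * b w) ∧ (∀ w, a w = 0 ↔ b w = 0)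

instance {W : ℕ} (a b : Fin W → ℕ) : Decidable (Qcond a b) := by
  unfold Qcond; infer_instance

lemma key {W : ℕ} (a b : Fin W → ℕ)
    (h : ∃ q : ℚ, 0 < q ∧ (fun w => (b w : ℚ)) = q • (fun w => (a w : ℚ))) :
    Qcond a b := by
  obtain ⟨q, hq, he⟩ := h
  have hb : ∀ w, (b w : ℚ) = q * a w := fun w => congrFun he w
  constructor
  · intro w w'
    have : (a w : ℚ) * b w' = a w' * b w := by rw [hb, hb]; ring
    exact_mod_cast this
  · intro w
    constructor
    · intro h0
      have : (b w : ℚ) = 0 := by rw [hb, h0]; simp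
      exact_mod_cast this
    · intro h0
      have : q * (a w : ℚ) = 0 := by rw [← hb, h0]; simp
      have := (mul_eq_zero.1 this).resolve_left (ne_of_gt hq)
      exact_mod_cast this

theorem stmt_7 :
    ValidScheme ![![0, 0, 1, 0], ![0, 1, 1, 2], ![1, 1, 1, 0]] ∧
    cost ![![0, 0, 1, 0], ![0, 1, 1, 2], ![1, 1, 1, 0]] = 5 := by
  constructor
  · intro d d' hne hex
    have hQ : Qcond (vvec ![![0, 0, 1, 0], ![0, 1, 1, 2], ![1, 1, 1, 0]] d)
        (vvec ![![0, 0, 1, 0], ![0, 1, 1, 2], ![1, 1, 1, 0]] d') := key _ _ hex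
    clear hex
    revert hQ
    revert hne
    revert d d'
    decide
  · decide
end

section
/- No valid 3×4 weighing scheme for 4 mints has cost at most 4; combined with the scheme of cost 5, the minimal cost is C(3,4) = 5. -/
set_option maxRecDepth 100000
set_option maxHeartbeats 1000000

/-- Proxy for "the excess vectors of `d'` and `d` are positive
rational multiples of each other". -/
def PropP {W M : ℕ} (C : Fin W → Fin M → ℕ) (d d' : Fin M → Bool) : Prop :=
  (∀ w w', vvec C d' w * vvec C d w' = vvec C d w * vvec C d' w') ∧
  ((∀ w, vvec C d w = 0) ↔ (∀ w, vvec C d' w = 0))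

instance {W M : ℕ} (C : Fin W → Fin M → ℕ) (d d' : Fin M → Bool) :
    Decidable (PropP C d d') := by unfold PropP; infer_instance

lemma exists_q_of_propP {W M : ℕ} (C : Fin W → Fin M → ℕ) (d d' : Fin M → Bool)
    (h : PropP C d d') :
    ∃ q : ℚ, 0 < q ∧
      (fun w => (vvec C d' w : ℚ)) = q • (fun w => (vvec C d w : ℚ)) := by
  by_cases h0 : ∀ w, vvec C d w = 0
  · have h0' := h.2.mp h0
    exact ⟨1, one_pos, by funext w; simp [h0 w, h0' w]⟩
  · push_neg at h0
    obtain ⟨w0, hw0⟩ := h0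
    have h0' : ¬ ∀ w, vvec C d' w = 0 := fun hh => hw0 (h.2.mpr hh w0)
    push_neg at h0'
    obtain ⟨w1, hw1⟩ := h0'
    have key0 : vvec C d' w0 ≠ 0 := by
      intro hz
      have hc := h.1 w0 w1
      rw [hz, zero_mul] at hc
      exact mul_ne_zero hw0 hw1 hc.symm
    refine ⟨(vvec C d' w0 : ℚ) / (vvec C d w0 : ℚ), ?_, ?_⟩
    · exact div_pos (by exact_mod_cast Nat.pos_of_ne_zero key0)
        (by exact_mod_cast Nat.pos_of_ne_zero hw0)
    · funext w
      have hc := h.1 w w0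
      have hd0 : ((vvec C d w0 : ℚ)) ≠ 0 := Nat.cast_ne_zero.mpr hw0
      have hcq : (vvec C d' w : ℚ) * (vvec C d w0 : ℚ) =
          (vvec C d w : ℚ) * (vvec C d' w0 : ℚ) := by exact_mod_cast hc
      simp only [Pi.smul_apply, smul_eq_mul]
      field_simp
      linarith [hcq]

lemma propP_of_exists_q {W M : ℕ} (C : Fin W → Fin M → ℕ) (d d' : Fin M → Bool)
    (h : ∃ q : ℚ, 0 < q ∧
      (fun w => (vvec C d' w : ℚ)) = q • (fun w => (vvec C d w : ℚ))) :
    PropP C d d' := by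
  obtain ⟨q, hq, heq⟩ := h
  have hw : ∀ w, (vvec C d' w : ℚ) = q * vvec C d w := by
    intro w
    have := congrFun heq w
    simpa using this
  constructor
  · intro w w'
    have : (vvec C d' w : ℚ) * (vvec C d w' : ℚ) =
        (vvec C d w : ℚ) * (vvec C d' w' : ℚ) := by rw [hw w, hw w']; ring
    exact_mod_cast this
  · constructor
    · intro hz w
      have := hw w
      rw [hz w] at this
      simpa using this
    · intro hz w
      have := hw w
      rw [hz w] at this
      have h' : (vvec C d w : ℚ) = 0 := by
        rcases mul_eq_zero.mp this.symm with h' | h'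
        · exact absurd h' (ne_of_gt hq)
        · exact h'
      exact_mod_cast h'

lemma validIff {W M : ℕ} (C : Fin W → Fin M → ℕ) :
    ValidScheme C ↔ ∀ d d' : Fin M → Bool, d ≠ d' → ¬ PropP C d d' := by
  constructor
  · intro h d d' hne hP
    exact h d d' hne (exists_q_of_propP C d d' hP)
  · intro h d d' hne hq
    exact h d d' hne (propP_of_exists_q C d d' hq)

/-! ### Fast arithmetic checker -/

def v3 (x0 x1 x2 x3 : ℕ) (d0 d1 d2 d3 : Bool) : ℕ :=
  (bif d0 then x0 else 0) + ((bif d1 then x1 else 0) +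
    ((bif d2 then x2 else 0) + (bif d3 then x3 else 0)))

def chk (c00 c01 c02 c03 c10 c11 c12 c13 c20 c21 c22 c23 : ℕ)
    (d0 d1 d2 d3 e0 e1 e2 e3 : Bool) : Bool :=
  let a1 := v3 c00 c01 c02 c03 d0 d1 d2 d3
  let a2 := v3 c10 c11 c12 c13 d0 d1 d2 d3
  let a3 := v3 c20 c21 c22 c23 d0 d1 d2 d3
  let b1 := v3 c00 c01 c02 c03 e0 e1 e2 e3
  let b2 := v3 c10 c11 c12 c13 e0 e1 e2 e3
  let b3 := v3 c20 c21 c22 c23 e0 e1 e2 e3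
  (b1 * a1 == a1 * b1) && (b1 * a2 == a1 * b2) && (b1 * a3 == a1 * b3) &&
  (b2 * a1 == a2 * b1) && (b2 * a2 == a2 * b2) && (b2 * a3 == a2 * b3) &&
  (b3 * a1 == a3 * b1) && (b3 * a2 == a3 * b2) && (b3 * a3 == a3 * b3) &&
  ((a1 == 0 && a2 == 0 && a3 == 0) == (b1 == 0 && b2 == 0 && b3 == 0))

lemma vvec_eq {W : ℕ} (C : Fin W → Fin 4 → ℕ) (d : Fin 4 → Bool) (w : Fin W) :
    vvec C d w = v3 (C w 0) (C w 1) (C w 2) (C w 3) (d 0) (d 1) (d 2) (d 3) := by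
  have t : ∀ (c : ℕ) (b : Bool), c * (if b then 1 else 0) = cond b c 0 := by
    intro c b; cases b <;> simp
  unfold vvec v3
  rw [Fin.sum_univ_four, t, t, t, t]
  ring

lemma bridge (C : Fin 3 → Fin 4 → ℕ) (d d' : Fin 4 → Bool)
    (h : chk (C 0 0) (C 0 1) (C 0 2) (C 0 3) (C 1 0) (C 1 1) (C 1 2) (C 1 3)
      (C 2 0) (C 2 1) (C 2 2) (C 2 3)
      (d 0) (d 1) (d 2) (d 3) (d' 0) (d' 1) (d' 2) (d' 3) = true) :
    PropP C d d' := by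
  unfold chk at h
  simp only [Bool.and_eq_true, beq_iff_eq] at h
  obtain ⟨⟨⟨⟨⟨⟨⟨⟨⟨h11, h12⟩, h13⟩, h21⟩, h22⟩, h23⟩, h31⟩, h32⟩, h33⟩, hiff⟩ := h
  have hiff' : ((vvec C d 0 = 0 ∧ vvec C d 1 = 0 ∧ vvec C d 2 = 0) ↔
      (vvec C d' 0 = 0 ∧ vvec C d' 1 = 0 ∧ vvec C d' 2 = 0)) := by
    rw [Bool.eq_iff_iff] at hiff
    simp only [Bool.and_eq_true, beq_iff_eq] at hiff
    simp only [vvec_eq]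
    tauto
  constructor
  · intro w w'
    fin_cases w <;> fin_cases w' <;> simp only [vvec_eq] <;>
      first
        | exact h11 | exact h12 | exact h13
        | exact h21 | exact h22 | exact h23
        | exact h31 | exact h32 | exact h33
  · have e1 : (∀ w, vvec C d w = 0) ↔
        (vvec C d 0 = 0 ∧ vvec C d 1 = 0 ∧ vvec C d 2 = 0) :=
      ⟨fun h => ⟨h 0, h 1, h 2⟩, fun ⟨h0, h1, h2⟩ w => by fin_cases w <;> assumption⟩
    have e2 : (∀ w, vvec C d' w = 0) ↔
        (vvec C d' 0 = 0 ∧ vvec C d' 1 = 0 ∧ vvec C d' 2 = 0) :=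
      ⟨fun h => ⟨h 0, h 1, h 2⟩, fun ⟨h0, h1, h2⟩ w => by fin_cases w <;> assumption⟩
    rw [e1, e2]
    exact hiff'

def bit (b : Bool) : ℕ := if b then 1 else 0

abbrev W8 := Bool × Bool × Bool × Bool × Bool × Bool × Bool × Bool

/-- Curated list of candidate witness pairs. -/
def wlist : List W8 :=
  [(false, false, false, true, false, false, true, true),
   (false, false, true, false, false, true, true, false),
   (false, true, false, false, false, true, false, true),
   (false, false, false, true, true, false, false, true),
   (false, false, true, false, true, false, false, false),
   (false, true, false, false, true, false, false, false),
   (false, false, true, true, true, true, false, true),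
   (false, false, true, true, true, true, true, false),
   (false, true, false, true, true, false, true, true),
   (false, true, false, true, true, true, true, false),
   (false, true, true, false, true, false, true, true),
   (false, true, true, false, true, true, false, true),
   (false, true, true, true, true, false, false, true),
   (false, true, true, true, true, false, true, false),
   (false, true, true, true, true, true, false, false),
   (true, false, false, true, true, true, true, false),
   (true, false, true, false, true, true, false, true),
   (true, false, true, true, true, true, false, false),
   (false, false, true, true, true, true, false, false),
   (false, true, false, true, true, false, true, false),
   (false, true, true, false, true, false, false, true),
   (false, false, false, true, true, true, true, false),
   (false, false, true, false, true, true, false, true),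
   (false, true, false, false, true, false, true, true),
   (false, true, true, true, true, false, false, false)]

def tfun1 (t : W8) : Fin 4 → Bool := ![t.1, t.2.1, t.2.2.1, t.2.2.2.1]
def tfun2 (t : W8) : Fin 4 → Bool :=
  ![t.2.2.2.2.1, t.2.2.2.2.2.1, t.2.2.2.2.2.2.1, t.2.2.2.2.2.2.2]

lemma wlist_ne : ∀ t ∈ wlist, tfun1 t ≠ tfun2 t := by decide

lemma keyaux : ∀ b00 b01 b02 b03 b10 b11 b12 b13 b20 b21 b22 b23 : Bool,
    (wlist.any fun t =>
      chk (bit b00) (bit b01) (bit b02) (bit b03) (bit b10) (bit b11) (bit b12)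
        (bit b13) (bit b20) (bit b21) (bit b22) (bit b23)
        t.1 t.2.1 t.2.2.1 t.2.2.2.1 t.2.2.2.2.1 t.2.2.2.2.2.1 t.2.2.2.2.2.2.1
        t.2.2.2.2.2.2.2) = true := by decide

lemma key_s8 (f : Fin 3 → Fin 4 → Bool) :
    ∃ d d' : Fin 4 → Bool, d ≠ d' ∧
      PropP (fun w m => if f w m then 1 else 0) d d' := by
  have h := keyaux (f 0 0) (f 0 1) (f 0 2) (f 0 3) (f 1 0) (f 1 1) (f 1 2) (f 1 3)
    (f 2 0) (f 2 1) (f 2 2) (f 2 3)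
  rw [List.any_eq_true] at h
  obtain ⟨t, ht, hchk⟩ := h
  refine ⟨tfun1 t, tfun2 t, wlist_ne t ht, ?_⟩
  apply bridge
  exact hchk

lemma no_cost_four (C : Fin 3 → Fin 4 → ℕ) (hC : ValidScheme C) : ¬ cost C ≤ 4 := by
  intro hcost
  rw [validIff] at hC
  have hcol : ∀ m, ∃ w, C w m ≠ 0 := by
    intro m
    by_contra hall
    push_neg at hall
    set d : Fin 4 → Bool := fun _ => false with hd
    set d' : Fin 4 → Bool := fun m' => decide (m' = m) with hd'
    have hne : d ≠ d' := by
      intro h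
      have := congrFun h m
      simp [hd, hd'] at this
    have hvz : ∀ w, vvec C d w = 0 := by
      intro w; simp [vvec, hd]
    have hvz' : ∀ w, vvec C d' w = 0 := by
      intro w
      apply Finset.sum_eq_zero
      intro m' _
      by_cases hm' : m' = m
      · subst hm'; simp [hall w]
      · simp [hd', hm']
    exact hC d d' hne ⟨fun w w' => by rw [hvz w, hvz' w, hvz w', hvz' w'],
      ⟨fun _ => hvz', fun _ => hvz⟩⟩
  have hsup1 : ∀ m, 1 ≤ Finset.univ.sup fun w => C w m := by
    intro m
    obtain ⟨w, hw⟩ := hcol m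
    exact le_trans (Nat.one_le_iff_ne_zero.mpr hw)
      (Finset.le_sup (f := fun w => C w m) (Finset.mem_univ w))
  have hsup_eq : ∀ m, (Finset.univ.sup fun w => C w m) = 1 := by
    have hexp : cost C = (Finset.univ.sup fun w => C w 0) +
        (Finset.univ.sup fun w => C w 1) + (Finset.univ.sup fun w => C w 2) +
        (Finset.univ.sup fun w => C w 3) := by
      simp [cost, Fin.sum_univ_four]
    have hsum : (Finset.univ.sup fun w => C w 0) +
        (Finset.univ.sup fun w => C w 1) + (Finset.univ.sup fun w => C w 2) +
        (Finset.univ.sup fun w => C w 3) ≤ 4 := hexp ▸ hcost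
    have h0 := hsup1 0; have h1 := hsup1 1; have h2 := hsup1 2; have h3 := hsup1 3
    have e0 : (Finset.univ.sup fun w => C w 0) = 1 := by omega
    have e1 : (Finset.univ.sup fun w => C w 1) = 1 := by omega
    have e2 : (Finset.univ.sup fun w => C w 2) = 1 := by omega
    have e3 : (Finset.univ.sup fun w => C w 3) = 1 := by omega
    intro m
    fin_cases m
    · exact e0
    · exact e1
    · exact e2
    · exact e3
  have hle1 : ∀ w m, C w m ≤ 1 := by
    intro w m
    calc C w m ≤ Finset.univ.sup fun w => C w m :=
      Finset.le_sup (f := fun w => C w m) (Finset.mem_univ w)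
    _ = 1 := hsup_eq m
  set f : Fin 3 → Fin 4 → Bool := fun w m => decide (C w m = 1) with hf
  have hCf : C = fun w m => if f w m then 1 else 0 := by
    funext w m
    have := hle1 w m
    by_cases h1 : C w m = 1
    · simp [hf, h1]
    · have h0 : C w m = 0 := by omega
      simp [hf, h1, h0]
  obtain ⟨d, d', hne, hP⟩ := key_s8 f
  rw [← hCf] at hP
  exact hC d d' hne hP

def C5 : Fin 3 → Fin 4 → ℕ := ![![0,0,1,2],![0,1,0,0],![1,0,1,0]]

lemma C5_valid : ValidScheme C5 := by
  rw [validIff]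
  decide

lemma C5_cost : cost C5 = 5 := by decide

theorem stmt_8 :
    (∀ C : Fin 3 → Fin 4 → ℕ, ValidScheme C → ¬ cost C ≤ 4) ∧
    (∃ C : Fin 3 → Fin 4 → ℕ, ValidScheme C ∧ cost C = 5) ∧
    IsLeast {n : ℕ | ∃ C : Fin 3 → Fin 4 → ℕ, ValidScheme C ∧ cost C = n} 5 := by
  refine ⟨no_cost_four, ⟨C5, C5_valid, C5_cost⟩, ⟨C5, C5_valid, C5_cost⟩, ?_⟩
  rintro n ⟨C, hC, hcost⟩
  by_contra hlt
  push_neg at hlt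
  exact no_cost_four C hC (by omega)
end

section
/- The 3×5 weighing scheme with rows (0,0,1,0,2), (0,1,1,2,0), (1,1,1,0,0) is valid for 5 mints with 3 weighings, and its cost is 1+1+1+2+2 = 7. Hence C(3,5) ≤ 7. -/
/-! Being a positive rational multiple is a decidable condition on natural-number vectors, so
validity of a concrete scheme is a finite check over all pairs of states. -/

theorem exists_pos_smul_eq_iff_cross_mul {ι : Type*} (a b : ι → ℕ) :
    (∃ q : ℚ, 0 < q ∧ (fun i => (b i : ℚ)) = q • (fun i => (a i : ℚ))) ↔
      (∀ i, a i = 0 ↔ b i = 0) ∧ ∀ i j, b j * a i = b i * a j := by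
  constructor
  · rintro ⟨q, hq, hba⟩
    have hb : ∀ i, (b i : ℚ) = q * a i := fun i => congrFun hba i
    refine ⟨fun i => ?_, fun i j => ?_⟩
    · have h : (b i : ℚ) = 0 ↔ (a i : ℚ) = 0 := by simp [hb i, hq.ne']
      exact_mod_cast h.symm
    · exact_mod_cast (by rw [hb i, hb j]; ring : (b j : ℚ) * a i = b i * a j)
  · rintro ⟨hzero, hcross⟩
    by_cases ha : ∀ i, a i = 0
    · exact ⟨1, one_pos, funext fun i => by simp [ha i, (hzero i).1 (ha i)]⟩
    push Not at ha
    obtain ⟨i, hai⟩ := ha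
    have hbi : b i ≠ 0 := fun h => hai ((hzero i).2 h)
    refine ⟨b i / a i, by positivity, funext fun j => ?_⟩
    have hj : (b j : ℚ) * a i = b i * a j := by exact_mod_cast hcross i j
    rw [Pi.smul_apply, smul_eq_mul, div_mul_eq_mul_div, eq_div_iff (by positivity)]
    exact hj

theorem stmt_9 :
    ValidScheme ![![0, 0, 1, 0, 2], ![0, 1, 1, 2, 0], ![1, 1, 1, 0, 0]] ∧
    cost ![![0, 0, 1, 0, 2], ![0, 1, 1, 2, 0], ![1, 1, 1, 0, 0]] = 7 := by
  refine ⟨fun d d' hne => ?_, by decide⟩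
  rw [exists_pos_smul_eq_iff_cross_mul]
  revert d d'
  decide
end

section
/- The 4×5 zero-one weighing scheme with rows (0,0,0,1,1), (0,1,1,0,1), (1,1,0,1,0), (0,0,1,1,0) is valid for 5 mints with 4 weighings, and its cost is 5. Hence C(4,5) = 5 (the lower bound 5 holding since every valid scheme has cost at least the number of mints). -/
theorem exists_pos_smul_natCast_iff {ι : Type*} (u v : ι → ℕ) :
    (∃ q : ℚ, 0 < q ∧ (fun i => (v i : ℚ)) = q • fun i => (u i : ℚ)) ↔
      (∀ i j, v i * u j = v j * u i) ∧ (u = 0 ↔ v = 0) := by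
  constructor
  · rintro ⟨q, hq, h⟩
    have hv : ∀ i, (v i : ℚ) = q * u i := fun i => congrFun h i
    refine ⟨fun i j => ?_, ⟨fun hu => ?_, fun hv0 => ?_⟩⟩
    · exact_mod_cast show (v i : ℚ) * u j = v j * u i by rw [hv, hv]; ring
    · funext i
      have := hv i
      simp only [hu, Pi.zero_apply, Nat.cast_zero, mul_zero] at this
      exact_mod_cast this
    · funext i
      have : q * (u i : ℚ) = 0 := by rw [← hv, hv0]; simp
      exact_mod_cast (mul_eq_zero.mp this).resolve_left hq.ne'
  · rintro ⟨hcross, hzero⟩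
    by_cases hu : u = 0
    · exact ⟨1, one_pos, by simp [hu, hzero.mp hu]⟩
    obtain ⟨j, hj⟩ := Function.ne_iff.mp hu
    have hvj : v j ≠ 0 := by
      obtain ⟨i, hi⟩ := Function.ne_iff.mp (mt hzero.mpr hu)
      intro hvj
      have := hcross i j
      rw [hvj, zero_mul] at this
      exact mul_ne_zero hi hj this
    refine ⟨v j / u j, div_pos (by exact_mod_cast Nat.pos_of_ne_zero hvj)
      (by exact_mod_cast Nat.pos_of_ne_zero hj), funext fun i => ?_⟩
    have hc : (v i : ℚ) * u j = v j * u i := by exact_mod_cast hcross i j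
    have hj' : (u j : ℚ) ≠ 0 := by exact_mod_cast hj
    simp only [Pi.smul_apply, smul_eq_mul]
    field_simp
    linarith

theorem validScheme_iff {W M : ℕ} (C : Fin W → Fin M → ℕ) :
    ValidScheme C ↔ ∀ d d' : Fin M → Bool, d ≠ d' →
      ¬ ((∀ w w', vvec C d' w * vvec C d w' = vvec C d' w' * vvec C d w) ∧
        (vvec C d = 0 ↔ vvec C d' = 0)) := by
  simp only [ValidScheme, exists_pos_smul_natCast_iff]

theorem vvec_false {W M : ℕ} (C : Fin W → Fin M → ℕ) : vvec C (fun _ => false) = 0 := by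
  funext w
  simp [vvec]

theorem vvec_eq_column {W M : ℕ} (C : Fin W → Fin M → ℕ) (m : Fin M) :
    vvec C (fun k => decide (k = m)) = fun w => C w m := by
  funext w
  simp [vvec]

theorem ValidScheme.one_le_sup_column {W M : ℕ} {C : Fin W → Fin M → ℕ} (hC : ValidScheme C)
    (m : Fin M) : 1 ≤ Finset.univ.sup fun w => C w m := by
  refine Nat.one_le_iff_ne_zero.mpr fun hsup => ?_
  have hcol : ∀ w, C w m = 0 := by simpa using (Finset.sup_eq_bot_iff _ _).mp hsup
  refine hC (fun k => decide (k = m)) (fun _ => false) (fun h => by simpa using congrFun h m)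
    ⟨1, one_pos, ?_⟩
  simp [vvec_false, vvec_eq_column, hcol]

theorem ValidScheme.le_cost {W M : ℕ} {C : Fin W → Fin M → ℕ} (hC : ValidScheme C) :
    M ≤ cost C :=
  calc M = ∑ _m : Fin M, 1 := by simp
    _ ≤ cost C := Finset.sum_le_sum fun m _ => hC.one_le_sup_column m

theorem stmt_10 :
    ValidScheme ![![0, 0, 0, 1, 1], ![0, 1, 1, 0, 1], ![1, 1, 0, 1, 0], ![0, 0, 1, 1, 0]] ∧
    cost ![![0, 0, 0, 1, 1], ![0, 1, 1, 0, 1], ![1, 1, 0, 1, 0], ![0, 0, 1, 1, 0]] = 5 ∧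
    (∀ C : Fin 4 → Fin 5 → ℕ, ValidScheme C → 5 ≤ cost C) :=
  ⟨(validScheme_iff _).mpr (by decide), by decide, fun _ hC => hC.le_cost⟩
end

section
/- The 5×6 zero-one weighing scheme with rows (0,0,1,0,0,1), (0,1,1,0,1,1), (0,0,0,1,1,1), (0,1,1,1,1,0), (1,1,1,1,1,0) is valid for 6 mints with 5 weighings, and its cost is 6. Hence C(5,6) = 6. -/
/-- Decidable criterion implied by proportionality. -/
def Good {W : ℕ} (v v' : Fin W → ℕ) : Prop :=
  (∀ i j, v' i * v j = v' j * v i) ∧ ((∀ i, v i = 0) ↔ (∀ i, v' i = 0))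

lemma prop_good {W : ℕ} (v v' : Fin W → ℕ)
    (h : ∃ q : ℚ, 0 < q ∧ (fun w => (v' w : ℚ)) = q • (fun w => (v w : ℚ))) :
    Good v v' := by
  obtain ⟨q, hq, he⟩ := h
  have he' : ∀ w, (v' w : ℚ) = q * v w := fun w => congrFun he w
  constructor
  · intro i j
    have : (v' i : ℚ) * v j = v' j * v i := by rw [he' i, he' j]; ring
    exact_mod_cast this
  · constructor
    · intro hz i
      have : (v' i : ℚ) = q * v i := he' i
      rw [hz i] at this
      have : (v' i : ℚ) = 0 := this.trans (by ring)
      exact_mod_cast this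
    · intro hz i
      have : (v' i : ℚ) = q * v i := he' i
      rw [hz i] at this; push_cast at this
      have : (v i : ℚ) = 0 := by
        rcases mul_eq_zero.mp this.symm with h | h
        · exact absurd h hq.ne'
        · exact h
      exact_mod_cast this

instance {W : ℕ} (v v' : Fin W → ℕ) : Decidable (Good v v') := by
  unfold Good; infer_instance

lemma valid_of_good {W M : ℕ} (C : Fin W → Fin M → ℕ)
    (h : ∀ d d' : Fin M → Bool, d ≠ d' → ¬ Good (vvec C d) (vvec C d')) :
    ValidScheme C := by
  intro d d' hne hx
  exact h d d' hne (prop_good _ _ hx)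

set_option maxRecDepth 10000 in
theorem stmt_11 :
    ValidScheme ![![0, 0, 1, 0, 0, 1], ![0, 1, 1, 0, 1, 1], ![0, 0, 0, 1, 1, 1],
        ![0, 1, 1, 1, 1, 0], ![1, 1, 1, 1, 1, 0]] ∧
    cost ![![0, 0, 1, 0, 0, 1], ![0, 1, 1, 0, 1, 1], ![0, 0, 0, 1, 1, 1],
        ![0, 1, 1, 1, 1, 0], ![1, 1, 1, 1, 1, 0]] = 6 ∧
    (∀ C : Fin 5 → Fin 6 → ℕ, ValidScheme C → 6 ≤ cost C) := by
  refine ⟨valid_of_good _ (by decide), by decide, ?_⟩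
  intro C hC
  have hcol : ∀ m : Fin 6, ∃ w, C w m ≠ 0 := by
    intro m
    by_contra h
    push_neg at h
    apply hC (fun k => decide (k = m)) (fun _ => false)
      (by intro he; have := congrFun he m; simp at this)
    refine ⟨1, one_pos, ?_⟩
    have h1 : vvec C (fun k => decide (k = m)) = fun _ => 0 := by
      funext w
      simp only [vvec]
      rw [Finset.sum_eq_zero]
      intro k _
      by_cases hk : k = m
      · subst hk; simp [h]
      · simp [hk]
    have h2 : vvec C (fun _ => false) = fun _ => 0 := by
      funext w; simp [vvec]
    rw [h1, h2]
    funext w; simp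
  have : ∀ m : Fin 6, 1 ≤ Finset.univ.sup fun w => C w m := by
    intro m
    obtain ⟨w, hw⟩ := hcol m
    exact le_trans (Nat.one_le_iff_ne_zero.mpr hw) (Finset.le_sup (f := fun w => C w m) (Finset.mem_univ w))
  calc 6 = ∑ _m : Fin 6, 1 := by simp
    _ ≤ cost C := Finset.sum_le_sum fun m _ => this m
end

section
/- For M = 3 mints and W = 2 weighings, the scheme with rows (0,1,2) and (1,1,0) is valid, giving C(2,3) ≤ 4; moreover no valid 2×3 scheme has cost 3, so C(2,3) = 4. -/
/-!
The scheme `(0,1,2), (1,1,0)` sends the eight states to `(0,0), (0,1), (1,1), (2,0), (1,2), (2,1),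
(3,1), (3,2)`, which lie on pairwise distinct rays; this is a finite check once positive
proportionality is replaced by equal cross products and equal supports. Conversely, a valid scheme
has no zero column (a single counterfeit mint would be invisible), so cost `≤ 3` forces a 0/1
matrix, and every 2 × 3 0/1 matrix identifies two states.
-/

theorem cross_mul_eq_of_eq_smul {ι : Type*} {u v : ι → ℕ} {q : ℚ}
    (h : (fun i => (v i : ℚ)) = q • fun i => (u i : ℚ)) (i j : ι) :
    v i * u j = v j * u i := by
  have hi := congrFun h i
  have hj := congrFun h j
  simp only [Pi.smul_apply, smul_eq_mul] at hi hj
  exact_mod_cast (by rw [hi, hj]; ring : (v i : ℚ) * u j = v j * u i)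

theorem eq_zero_iff_of_eq_smul {ι : Type*} {u v : ι → ℕ} {q : ℚ} (hq : q ≠ 0)
    (h : (fun i => (v i : ℚ)) = q • fun i => (u i : ℚ)) (i : ι) :
    u i = 0 ↔ v i = 0 := by
  have hi := congrFun h i
  simp only [Pi.smul_apply, smul_eq_mul] at hi
  rw [← Nat.cast_eq_zero (R := ℚ), ← Nat.cast_eq_zero (R := ℚ) (n := v i), hi]
  simp [hq]

section

variable {W M : ℕ} {C : Fin W → Fin M → ℕ}

theorem validScheme_of_forall_ne
    (h : ∀ d d' : Fin M → Bool, d ≠ d' →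
      (∃ i j, vvec C d' i * vvec C d j ≠ vvec C d' j * vvec C d i) ∨
        ∃ i, ¬(vvec C d i = 0 ↔ vvec C d' i = 0)) :
    ValidScheme C := by
  rintro d d' hne ⟨q, hq, heq⟩
  rcases h d d' hne with ⟨i, j, hij⟩ | ⟨i, hi⟩
  · exact hij (cross_mul_eq_of_eq_smul heq i j)
  · exact hi (eq_zero_iff_of_eq_smul hq.ne' heq i)

theorem ValidScheme.vvec_injective (hC : ValidScheme C) : Function.Injective (vvec C) := by
  intro d d' heq
  by_contra hne
  exact hC d d' hne ⟨1, one_pos, by simp [heq]⟩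

theorem ValidScheme.exists_ne_zero (hC : ValidScheme C) (m : Fin M) : ∃ w, C w m ≠ 0 := by
  by_contra! hm
  have hsingle : vvec C (fun i => decide (i = m)) = vvec C fun _ => false := by
    funext w
    simp [vvec, hm]
  have := congrFun (hC.vvec_injective hsingle) m
  simp at this

theorem ValidScheme.le_one_of_cost_le (hC : ValidScheme C) (hcost : cost C ≤ M)
    (w : Fin W) (m : Fin M) : C w m ≤ 1 := by
  have hpos : ∀ m', 1 ≤ Finset.univ.sup fun w => C w m' := fun m' => by
    obtain ⟨w', hw'⟩ := hC.exists_ne_zero m'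
    exact (Nat.one_le_iff_ne_zero.mpr hw').trans
      (Finset.le_sup (f := fun w => C w m') (Finset.mem_univ w'))
  refine (Finset.le_sup (f := fun w => C w m) (Finset.mem_univ w)).trans ?_
  by_contra! hlt
  have := Finset.sum_lt_sum (fun m' _ => hpos m') ⟨m, Finset.mem_univ m, hlt⟩
  simp only [Finset.sum_const, Finset.card_univ, Fintype.card_fin, smul_eq_mul, mul_one] at this
  exact (hcost.trans_lt this).false

end

-- Either two columns coincide, or they are `01, 10, 11` and the last is the sum of the others.
theorem not_injective_vvec_zero_one (B : Fin 2 → Fin 3 → Bool) :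
    ¬ Function.Injective (vvec fun w m => if B w m then 1 else 0) := by
  revert B
  decide

theorem not_validScheme_of_cost_le_three {C : Fin 2 → Fin 3 → ℕ} (hcost : cost C ≤ 3) :
    ¬ ValidScheme C := by
  intro hC
  have hzero_one : C = fun w m => if decide (C w m = 1) then 1 else 0 := by
    funext w m
    have := hC.le_one_of_cost_le hcost w m
    interval_cases C w m <;> rfl
  exact not_injective_vvec_zero_one _ (hzero_one ▸ hC.vvec_injective)

theorem stmt_14 :
    ValidScheme ![![0, 1, 2], ![1, 1, 0]] ∧ cost ![![0, 1, 2], ![1, 1, 0]] = 4 ∧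
    (∀ C : Fin 2 → Fin 3 → ℕ, ValidScheme C → cost C ≠ 3) ∧
    (∀ C : Fin 2 → Fin 3 → ℕ, ValidScheme C → 4 ≤ cost C) := by
  refine ⟨validScheme_of_forall_ne (by decide), by decide, ?_, ?_⟩
  · exact fun C hC h => not_validScheme_of_cost_le_three h.le hC
  · exact fun C hC => not_lt.mp fun h => not_validScheme_of_cost_le_three (by omega) hC
end

section
/- The scheme from equation (7) of the paper, C : Fin 3 → Fin 4 → ℕ with rows (1,1,0,0), (0,1,1,0), (0,0,1,2), is valid for 4 mints with 3 weighings, and its cost is 1+1+1+2 = 5. -/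
theorem exists_pos_smul_natCast_eq_iff {ι K : Type*} [Field K] [LinearOrder K]
    [IsStrictOrderedRing K] (u v : ι → ℕ) :
    (∃ q : K, 0 < q ∧ (fun i => (v i : K)) = q • fun i => (u i : K)) ↔
      (∀ i, u i = 0 ↔ v i = 0) ∧ ∀ i j, v i * u j = v j * u i := by
  constructor
  · rintro ⟨q, hq, h⟩
    have hvu (i) : (v i : K) = q * u i := congrFun h i
    refine ⟨fun i => ?_, fun i j => ?_⟩
    · rw [← Nat.cast_eq_zero (R := K), ← Nat.cast_eq_zero (R := K) (n := v i), hvu]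
      simp [hq.ne']
    · have : (v i : K) * u j = v j * u i := by rw [hvu i, hvu j]; ring
      exact_mod_cast this
  · rintro ⟨hzero, hminor⟩
    by_cases hu : ∀ i, u i = 0
    · exact ⟨1, one_pos, funext fun i => by simp [hu i, (hzero i).1 (hu i)]⟩
    push Not at hu
    obtain ⟨j, hj⟩ := hu
    have hvj : v j ≠ 0 := (hzero j).not.1 hj
    refine ⟨v j / u j, by positivity, funext fun i => ?_⟩
    have : (v i : K) * u j = v j * u i := by exact_mod_cast hminor i j
    simp only [Pi.smul_apply, smul_eq_mul]
    field_simp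
    linarith

theorem stmt_15 :
    ValidScheme ![![1, 1, 0, 0], ![0, 1, 1, 0], ![0, 0, 1, 2]] ∧
    cost ![![1, 1, 0, 0], ![0, 1, 1, 0], ![0, 0, 1, 2]] = 5 := by
  refine ⟨fun d d' hne => ?_, by decide⟩
  -- proportionality becomes a statement about ℕ, so all 16² pairs of states can be checked by `decide`
  rw [exists_pos_smul_natCast_eq_iff]
  revert d d'
  decide
end

section
/- Exponential lower bound on cost: any valid weighing scheme for M mints with W weighings has cost K = ∑_m max_w C w m satisfying K ≥ 2^(M/W) - 1, i.e., (K+1)^W ≥ 2^M. -/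
theorem stmt_17 {W M : ℕ} (C : Fin W → Fin M → ℕ) (h : ValidScheme C) :
    2 ^ M ≤ (cost C + 1) ^ W := by
  have hbound : ∀ (d : Fin M → Bool) (w : Fin W), vvec C d w < cost C + 1 := by
    intro d w
    have : vvec C d w ≤ cost C := by
      unfold vvec cost
      refine Finset.sum_le_sum fun m _ => ?_
      calc C w m * (if d m then 1 else 0) ≤ C w m * 1 := by
            apply Nat.mul_le_mul_left; split <;> simp
        _ = C w m := Nat.mul_one _
        _ ≤ Finset.univ.sup fun w => C w m := Finset.le_sup (f := fun w => C w m) (Finset.mem_univ w)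
    omega
  have hinj : Function.Injective (fun (d : Fin M → Bool) (w : Fin W) =>
      (⟨vvec C d w, hbound d w⟩ : Fin (cost C + 1))) := by
    intro d d' hdd
    by_contra hne
    apply h d d' hne
    refine ⟨1, one_pos, ?_⟩
    funext w
    have := congrFun hdd w
    simp only [Fin.mk.injEq] at this
    simp [this]
  calc 2 ^ M = Fintype.card (Fin M → Bool) := by simp
    _ ≤ Fintype.card (Fin W → Fin (cost C + 1)) := Fintype.card_le_of_injective _ hinj
    _ = (cost C + 1) ^ W := by simp
end
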